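/- For every n ≥ 1, the identity of polynomials in three variables holds: Σ_{σ ∈ Q_n} x^{lap(σ)} y^{dasc(σ)} z^{dp(σ)} = Σ_{i=1}^{n} Σ_{j=0}^{n−1} γ_{n,i,j} · x^i (y+z)^j, where γ_{n,i,j} is the number of σ ∈ Q_n with lap(σ) = i, dasc(σ) = j and dp(σ) = 0. -/

import Mathlib

open Finset MvPolynomial

/-- Stirling permutations of order `n`, encoded as functions `Fin (2*n) → Fin (n+1)`
in one-line notation (position `i` holds the letter `σ (i) ∈ {1,…,n}`), such that each
letter `1,…,n` occurs exactly twice and all entries between the two occurrences of a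
letter are larger than that letter. -/
def StirlingSet (n : ℕ) : Finset (Fin (2*n) → Fin (n+1)) :=
  Finset.univ.filter (fun σ =>
    (∀ v : Fin (n+1), (v : ℕ) ≠ 0 →
        (Finset.univ.filter (fun i => σ i = v)).card = 2) ∧
    (∀ i j k : Fin (2*n), i < j → j < k → σ i = σ k → σ i < σ j))

/-- The letter at position `i ∈ {1,…,2n}` of a Stirling permutation, with the
convention that positions outside this range (in particular position `0`) hold `0`. -/
def sval {n : ℕ} (σ : Fin (2*n) → Fin (n+1)) (i : ℕ) : ℕ :=
  if h : 1 ≤ i ∧ i ≤ 2*n then (σ ⟨i - 1, by omega⟩ : ℕ) else 0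

/-- The number of ascent-plateaus: indices `2 ≤ i ≤ 2n-1` with `σ_{i-1} < σ_i = σ_{i+1}`. -/
def apQ {n : ℕ} (σ : Fin (2*n) → Fin (n+1)) : ℕ :=
  ((Finset.Icc 2 (2*n - 1)).filter
    (fun i => sval σ (i-1) < sval σ i ∧ sval σ i = sval σ (i+1))).card

/-- The number of left ascent-plateaus: indices `1 ≤ i ≤ 2n-1` with
`σ_{i-1} < σ_i = σ_{i+1}`, where `σ_0 = 0`. -/
def lapQ {n : ℕ} (σ : Fin (2*n) → Fin (n+1)) : ℕ :=
  ((Finset.Icc 1 (2*n - 1)).filter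
    (fun i => sval σ (i-1) < sval σ i ∧ sval σ i = sval σ (i+1))).card

/-- The number of double ascents: indices `1 ≤ i ≤ 2n-1` with
`σ_{i-1} < σ_i < σ_{i+1}`, where `σ_0 = 0`. -/
def dascQ {n : ℕ} (σ : Fin (2*n) → Fin (n+1)) : ℕ :=
  ((Finset.Icc 1 (2*n - 1)).filter
    (fun i => sval σ (i-1) < sval σ i ∧ sval σ i < sval σ (i+1))).card

/-- The number of descent-plateaus: indices `2 ≤ i ≤ 2n-1` with
`σ_{i-1} > σ_i = σ_{i+1}`. -/
def dpQ {n : ℕ} (σ : Fin (2*n) → Fin (n+1)) : ℕ :=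
  ((Finset.Icc 2 (2*n - 1)).filter
    (fun i => sval σ i < sval σ (i-1) ∧ sval σ i = sval σ (i+1))).card

/-- The number of ascents: indices `1 ≤ i ≤ 2n-1` with `σ_i < σ_{i+1}` or `i = 1`. -/
def ascQ {n : ℕ} (σ : Fin (2*n) → Fin (n+1)) : ℕ :=
  ((Finset.Icc 1 (2*n - 1)).filter
    (fun i => sval σ i < sval σ (i+1) ∨ i = 1)).card

/-- The number of plateaus: indices `1 ≤ i ≤ 2n-1` with `σ_i = σ_{i+1}`. -/
def platQ {n : ℕ} (σ : Fin (2*n) → Fin (n+1)) : ℕ :=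
  ((Finset.Icc 1 (2*n - 1)).filter (fun i => sval σ i = sval σ (i+1))).card

/-- The flag ascent-plateau number: `2·ap(σ)+1` if `σ_1 = σ_2`, and `2·ap(σ)` otherwise. -/
def fapQ {n : ℕ} (σ : Fin (2*n) → Fin (n+1)) : ℕ :=
  if 1 ≤ n ∧ sval σ 1 = sval σ 2 then 2 * apQ σ + 1 else 2 * apQ σ

/-- `γ_{n,i,j}`: the number of Stirling permutations of order `n` with `lap = i`,
`dasc = j` and `dp = 0`. -/
def gammaNum (n i j : ℕ) : ℕ :=
  ((StirlingSet n).filter (fun σ => lapQ σ = i ∧ dascQ σ = j ∧ dpQ σ = 0)).card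


/-!
Write `N(i, a, b)` for the number of Stirling permutations with `lap = i`, `dasc = a`,
`dp = b`. If `P` is a double ascent whose letter `k` recurs at `Q`, then everything strictly
between the two copies is larger than `k`; moving the first copy to position `Q - 1` turns the
double ascent at `P` into a descent-plateau at `Q - 1` and keeps `lap` and every other double
ascent and descent-plateau. Conversely, the first copy of a descent-plateau `k k` moves back to
the start of the maximal run of letters larger than `k` before it. Counting permutations with a
marked double ascent, resp. descent-plateau, gives `(a+1) N(i, a+1, b) = (b+1) N(i, a, b+1)`,
hence `N(i, a, b) = C(a+b, b) N(i, a+b, 0)`, which is exactly the coefficient of `x^i y^a z^b`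
in `∑ γ_{n,i,j} x^i (y+z)^j`.
-/

theorem eq_choose_mul_of_succ_mul_eq (N : ℕ → ℕ → ℕ)
    (h : ∀ a b, N (a+1) b * (a+1) = N a (b+1) * (b+1)) (a b : ℕ) :
    N a b = (a+b).choose b * N (a+b) 0 := by
  induction b generalizing a with
  | zero => simp
  | succ b ih =>
    have hchoose := Nat.choose_succ_right_eq (a+b+1) b
    rw [show a + b + 1 - b = a + 1 by omega] at hchoose
    apply Nat.eq_of_mul_eq_mul_right (by omega : 0 < b + 1)
    calc N a (b+1) * (b+1) = N (a+1) b * (a+1) := (h a b).symm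
      _ = (a+b+1).choose b * (a+1) * N (a+b+1) 0 := by
        rw [ih, show a + 1 + b = a + b + 1 by omega]; ring
      _ = _ := by rw [← hchoose, show a + (b+1) = a + b + 1 by omega]; ring

section generating

variable {α β R : Type*} [CommSemiring R] [DecidableEq β] (s : Finset α) (l : α → β)
  (u v : α → ℕ)

lemma sum_filter_eq_card_mul_add_pow
    (hN : ∀ i a b, #{x ∈ s | l x = i ∧ u x = a ∧ v x = b} =
      (a+b).choose b * #{x ∈ s | l x = i ∧ u x = a + b ∧ v x = 0})
    (f : β → R) (y z : R) (i : β) (j : ℕ) :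
    ∑ x ∈ s with (l x, u x + v x) = (i, j), f (l x) * y ^ u x * z ^ v x =
      #{x ∈ s | l x = i ∧ u x = j ∧ v x = 0} * (f i * (y + z) ^ j) := by
  rw [← sum_fiberwise_of_maps_to (g := v) (t := range (j+1)) fun x hx => mem_range.mpr (by
    simp only [mem_filter, Prod.mk.injEq] at hx; omega)]
  rw [add_comm y, add_pow, mul_sum, mul_sum]
  refine sum_congr rfl fun m hm => ?_
  have hmj : m ≤ j := Nat.lt_succ_iff.mp (mem_range.mp hm)
  have hfilter : {x ∈ {x ∈ s | (l x, u x + v x) = (i, j)} | v x = m} =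
      {x ∈ s | l x = i ∧ u x = j - m ∧ v x = m} := by
    rw [filter_filter]
    refine filter_congr fun x _ => ?_
    simp only [Prod.mk.injEq, and_assoc]
    exact and_congr_right fun _ => by omega
  have hterm : ∀ x ∈ {x ∈ {x ∈ s | (l x, u x + v x) = (i, j)} | v x = m},
      f (l x) * y ^ u x * z ^ v x = f i * y ^ (j - m) * z ^ m := fun x hx => by
    rw [hfilter, mem_filter] at hx
    rw [hx.2.1, hx.2.2.1, hx.2.2.2]
  rw [sum_congr rfl hterm, sum_const, hfilter, hN, Nat.sub_add_cancel hmj, nsmul_eq_mul]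
  push_cast
  ring

theorem sum_mul_pow_mul_pow_eq_sum_add_pow
    (h : ∀ i a b, #{x ∈ s | l x = i ∧ u x = a + 1 ∧ v x = b} * (a+1) =
      #{x ∈ s | l x = i ∧ u x = a ∧ v x = b + 1} * (b+1))
    (f : β → R) (y z : R) :
    ∑ x ∈ s, f (l x) * y ^ u x * z ^ v x = ∑ x ∈ s with v x = 0, f (l x) * (y + z) ^ u x := by
  have hN := fun i => eq_choose_mul_of_succ_mul_eq
    (fun a b => #{x ∈ s | l x = i ∧ u x = a ∧ v x = b}) (h i)
  let key : α → β × ℕ := fun x => (l x, u x + v x)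
  have hL := sum_fiberwise_of_maps_to (s := s) (t := s.image key)
    (fun x hx => mem_image_of_mem key hx) fun x => f (l x) * y ^ u x * z ^ v x
  have hR := sum_fiberwise_of_maps_to (s := {x ∈ s | v x = 0}) (t := s.image key)
    (fun x hx => mem_image_of_mem key (mem_filter.mp hx).1) fun x => f (l x) * (y + z) ^ u x
  rw [← hL, ← hR]
  refine sum_congr rfl fun ⟨i, j⟩ _ => ?_
  have hterm : ∀ x ∈ {x ∈ {x ∈ s | v x = 0} | key x = (i, j)},
      f (l x) * (y + z) ^ u x = f i * (y + z) ^ j := fun x hx => by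
    simp only [mem_filter, key, Prod.mk.injEq] at hx
    rw [hx.2.1, ← hx.2.2, hx.1.2, add_zero]
  rw [sum_filter_eq_card_mul_add_pow s l u v hN, sum_congr rfl hterm, sum_const, nsmul_eq_mul,
    filter_filter]
  congr 3
  refine filter_congr fun x _ => ?_
  simp only [key, Prod.mk.injEq]
  constructor
  · rintro ⟨hl, hu, hv⟩; exact ⟨hv, hl, by omega⟩
  · rintro ⟨hv, hl, hu⟩; exact ⟨hl, by omega, hv⟩

end generating

lemma card_erase_filter_eq_of_invOn {α β : Type*} [DecidableEq α] [DecidableEq β]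
    {s : Finset α} {t : Finset β} {p : α → Prop} {q : β → Prop} [DecidablePred p]
    [DecidablePred q] (f : α → β) (g : β → α) (hf : ∀ a ∈ s, f a ∈ t) (hg : ∀ b ∈ t, g b ∈ s)
    (hgf : ∀ a ∈ s, g (f a) = a) (hfg : ∀ b ∈ t, f (g b) = b) {a₀ : α} (ha₀ : a₀ ∈ s)
    (hpq : ∀ a ∈ s, a ≠ a₀ → (q (f a) ↔ p a)) :
    #({a ∈ s | p a}.erase a₀) = #({b ∈ t | q b}.erase (f a₀)) := by
  refine card_nbij' f g (fun a ha => ?_) (fun b hb => ?_) (fun a ha => ?_) (fun b hb => ?_)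
  all_goals simp only [coe_erase, coe_filter, Set.mem_sdiff, Set.mem_ofPred_eq,
    Set.mem_singleton_iff] at *
  · refine ⟨⟨hf a ha.1.1, (hpq a ha.1.1 ha.2).mpr ha.1.2⟩, fun h => ha.2 ?_⟩
    rw [← hgf a ha.1.1, h, hgf a₀ ha₀]
  · have hne : g b ≠ a₀ := fun h => hb.2 (by rw [← h, hfg b hb.1.1])
    refine ⟨⟨hg b hb.1.1, ?_⟩, hne⟩
    rw [← hpq _ (hg b hb.1.1) hne, hfg b hb.1.1]
    exact hb.1.2
  · exact hgf a ha.1.1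
  · exact hfg b hb.1.1

section Stirling

variable {n : ℕ}

lemma sval_succ (σ : Fin (2*n) → Fin (n+1)) (a : Fin (2*n)) : sval σ (a + 1) = σ a := by
  simp [sval]

lemma sval_eq_zero {σ : Fin (2*n) → Fin (n+1)} {j : ℕ} (h : ¬(1 ≤ j ∧ j ≤ 2*n)) :
    sval σ j = 0 :=
  dif_neg h

lemma sval_le (σ : Fin (2*n) → Fin (n+1)) (j : ℕ) : sval σ j ≤ n := by
  unfold sval
  split
  · exact Nat.lt_succ_iff.mp (Fin.isLt _)
  · exact Nat.zero_le n

lemma mem_Icc_of_sval_pred_lt {σ : Fin (2*n) → Fin (n+1)} {p : ℕ}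
    (h : sval σ (p-1) < sval σ p) : 1 ≤ p ∧ p ≤ 2*n := by
  by_contra hp
  rw [sval_eq_zero hp] at h
  omega

lemma card_filter_sval_eq (σ : Fin (2*n) → Fin (n+1)) (v : Fin (n+1)) :
    #{i | σ i = v} = #{j ∈ Icc 1 (2*n) | sval σ j = v} := by
  have hI : ∀ {j}, j ∈ {j ∈ Icc 1 (2*n) | sval σ j = v} → 1 ≤ j ∧ j ≤ 2*n :=
    fun hj => mem_Icc.mp (mem_filter.mp hj).1
  refine card_bij' (fun i _ => i.1 + 1) (fun j hj => ⟨j - 1, by have := hI hj; omega⟩)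
    (fun i hi => ?_) (fun j hj => ?_) (fun i _ => by simp)
    (fun j hj => by have := hI hj; simp; omega)
  · simp_all [sval_succ]
  · simpa [sval, hI hj, Fin.ext_iff] using (mem_filter.mp hj).2

namespace StirlingSet

variable {σ : Fin (2*n) → Fin (n+1)}

theorem mem_iff_sval : σ ∈ StirlingSet n ↔
    (∀ v, 1 ≤ v → v ≤ n → #{j ∈ Icc 1 (2*n) | sval σ j = v} = 2) ∧
    (∀ x t y, 1 ≤ x → x < t → t < y → y ≤ 2*n → sval σ x = sval σ y →
      sval σ x < sval σ t) := by
  have hval : ∀ j (h : 1 ≤ j ∧ j ≤ 2*n), sval σ j = σ ⟨j - 1, by omega⟩ := fun j h => dif_pos h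
  simp only [StirlingSet, mem_filter, mem_univ, true_and]
  refine and_congr ⟨fun h v hv1 hvn => ?_, fun h v hv => ?_⟩ ⟨fun h x t y hx hxt hty hy he => ?_,
    fun h i j k hij hjk he => ?_⟩
  · exact (card_filter_sval_eq σ ⟨v, by omega⟩).symm.trans (h _ (by simp; omega))
  · rw [card_filter_sval_eq, h v (by omega) (by omega)]
  · rw [hval x (by omega), hval y (by omega)] at he
    rw [hval x (by omega), hval t (by omega)]
    exact h _ _ _ (Fin.mk_lt_mk.mpr (by omega)) (Fin.mk_lt_mk.mpr (by omega)) (Fin.ext he)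
  · rw [Fin.lt_def] at hij hjk
    have := h (i + 1) (j + 1) (k + 1) (by omega) (by omega) (by omega) (by omega)
      (by simp [sval_succ, he])
    simpa [sval_succ] using this

lemma card_sval_eq (hσ : σ ∈ StirlingSet n) {v : ℕ} (hv1 : 1 ≤ v) (hvn : v ≤ n) :
    #{j ∈ Icc 1 (2*n) | sval σ j = v} = 2 :=
  (mem_iff_sval.mp hσ).1 v hv1 hvn

lemma sval_lt_of_sval_eq (hσ : σ ∈ StirlingSet n) {x t y : ℕ} (hx : 1 ≤ x) (hxt : x < t)
    (hty : t < y) (hy : y ≤ 2*n) (he : sval σ x = sval σ y) : sval σ x < sval σ t :=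
  (mem_iff_sval.mp hσ).2 x t y hx hxt hty hy he

/-- The `n` letters, each twice, fill all `2n` positions. -/
theorem sval_pos (hσ : σ ∈ StirlingSet n) {j : ℕ} (hj1 : 1 ≤ j) (hj2 : j ≤ 2*n) :
    0 < sval σ j := by
  have htotal := card_eq_sum_card_fiberwise (s := Icc 1 (2*n)) (t := range (n+1))
    (f := sval σ) (fun j _ => by simpa [Nat.lt_succ_iff] using sval_le σ j)
  rw [sum_range_succ', sum_congr rfl fun v hv => card_sval_eq hσ (by omega)
    (by have := mem_range.mp hv; omega)] at htotal
  simp only [sum_const, card_range, smul_eq_mul, Nat.card_Icc] at htotal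
  have hzero : #{i ∈ Icc 1 (2*n) | sval σ i = 0} = 0 := by omega
  rw [card_eq_zero, filter_eq_empty_iff] at hzero
  exact Nat.pos_of_ne_zero (hzero (mem_Icc.mpr ⟨hj1, hj2⟩))

theorem eq_or_eq_of_sval_eq (hσ : σ ∈ StirlingSet n) {x y t : ℕ} (hx : 1 ≤ x) (hy : y ≤ 2*n)
    (hxy : x < y) (he : sval σ x = sval σ y) (ht : sval σ t = sval σ x) : t = x ∨ t = y := by
  have hsub : {x, y} ⊆ {j ∈ Icc 1 (2*n) | sval σ j = sval σ x} := by
    intro j hj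
    simp only [mem_insert, mem_singleton] at hj
    rcases hj with rfl | rfl <;> simp [*] <;> omega
  have hcard := card_sval_eq hσ (sval_pos hσ hx (by omega)) (sval_le σ x)
  have heq := eq_of_subset_of_card_le hsub (by rw [hcard, card_pair hxy.ne])
  have htmem : t ∈ {j ∈ Icc 1 (2*n) | sval σ j = sval σ x} := by
    by_cases htI : 1 ≤ t ∧ t ≤ 2*n
    · simp [htI, ht]
    · have := sval_pos hσ hx (by omega)
      rw [sval_eq_zero htI] at ht
      omega
  simpa [← heq] using htmem

theorem le_of_sval_eq_of_pred_lt (hσ : σ ∈ StirlingSet n) {p q : ℕ}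
    (hp : sval σ (p-1) < sval σ p) (hq : 1 ≤ q) (he : sval σ q = sval σ p) : p ≤ q := by
  have hpI := mem_Icc_of_sval_pred_lt hp
  by_contra! hqp
  rcases eq_or_lt_of_le (by omega : q ≤ p - 1) with h | h
  · rw [h] at he; omega
  · have := sval_lt_of_sval_eq hσ hq h (by omega) hpI.2 he
    omega

theorem eq_of_sval_eq_of_pred_lt (hσ : σ ∈ StirlingSet n) {p q : ℕ}
    (hp : sval σ (p-1) < sval σ p) (hq : sval σ (q-1) < sval σ q) (he : sval σ p = sval σ q) :
    p = q :=
  le_antisymm (le_of_sval_eq_of_pred_lt hσ hp (mem_Icc_of_sval_pred_lt hq).1 he.symm)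
    (le_of_sval_eq_of_pred_lt hσ hq (mem_Icc_of_sval_pred_lt hp).1 he)

end StirlingSet

/-- `w ∘ moveIdx a b` is the word `w` with its letter at position `a` moved to position `b`. -/
def moveIdx (a b j : ℕ) : ℕ :=
  if j = b then a else if a ≤ j ∧ j < b then j + 1 else if b < j ∧ j ≤ a then j - 1 else j

section moveIdx

variable {a b j : ℕ}

lemma moveIdx_moveIdx (a b j : ℕ) : moveIdx b a (moveIdx a b j) = j := by
  unfold moveIdx; split_ifs <;> omega

lemma moveIdx_right : moveIdx a b b = a := by simp [moveIdx]

lemma moveIdx_of_lt (hja : j < a) (hjb : j < b) : moveIdx a b j = j := by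
  unfold moveIdx; split_ifs <;> omega

lemma moveIdx_of_gt (haj : a < j) (hbj : b < j) : moveIdx a b j = j := by
  unfold moveIdx; split_ifs <;> omega

lemma moveIdx_of_le_of_lt (haj : a ≤ j) (hjb : j < b) : moveIdx a b j = j + 1 := by
  unfold moveIdx; split_ifs <;> omega

lemma moveIdx_of_lt_of_le (hbj : b < j) (hja : j ≤ a) : moveIdx a b j = j - 1 := by
  unfold moveIdx; split_ifs <;> omega

lemma moveIdx_mem_Icc {m : ℕ} (ha : 1 ≤ a ∧ a ≤ m) (hb : 1 ≤ b ∧ b ≤ m)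
    (hj : 1 ≤ j ∧ j ≤ m) : 1 ≤ moveIdx a b j ∧ moveIdx a b j ≤ m := by
  unfold moveIdx; split_ifs <;> omega

lemma moveIdx_lt_moveIdx {x y : ℕ} (hxy : x < y) (hx : x ≠ b) (hy : y ≠ b) :
    moveIdx a b x < moveIdx a b y := by
  unfold moveIdx; split_ifs <;> omega

lemma moveIdx_moveIdx_pred {a b i : ℕ} (ha : 1 ≤ a) (hab : a < b) (hi : i ≠ a) :
    moveIdx a b (moveIdx b a i - 1) = i - 1 ∨ (i = a + 1 ∧ moveIdx a b (moveIdx b a i - 1) = a - 1)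
      ∨ (i = b + 1 ∧ moveIdx a b (moveIdx b a i - 1) = a) := by
  unfold moveIdx; split_ifs <;> omega

lemma moveIdx_moveIdx_succ {a b i : ℕ} (hab : a < b) (hi : i ≠ a) :
    moveIdx a b (moveIdx b a i + 1) = i + 1 ∨ (i + 1 = a ∧ moveIdx a b (moveIdx b a i + 1) = a + 1)
      ∨ (i = b ∧ moveIdx a b (moveIdx b a i + 1) = a) := by
  unfold moveIdx; split_ifs <;> omega

end moveIdx

-- The `else` branch is never taken when `a, b ∈ [1, 2n]`, see `sval_move`.
def move (σ : Fin (2*n) → Fin (n+1)) (a b : ℕ) : Fin (2*n) → Fin (n+1) :=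
  fun i => if h : moveIdx a b (i + 1) - 1 < 2*n then σ ⟨_, h⟩ else σ i

section move

variable {σ : Fin (2*n) → Fin (n+1)} {a b : ℕ}

lemma sval_move (ha : 1 ≤ a ∧ a ≤ 2*n) (hb : 1 ≤ b ∧ b ≤ 2*n) (j : ℕ) :
    sval (move σ a b) j = sval σ (moveIdx a b j) := by
  by_cases hj : 1 ≤ j ∧ j ≤ 2*n
  · have hm := moveIdx_mem_Icc ha hb hj
    rw [sval, dif_pos hj, sval, dif_pos hm, move, Nat.sub_add_cancel hj.1,
      dif_pos (by omega)]
  · have : moveIdx a b j = j := by unfold moveIdx; split_ifs <;> omega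
    rw [this, sval_eq_zero hj, sval_eq_zero hj]

lemma move_move (ha : 1 ≤ a ∧ a ≤ 2*n) (hb : 1 ≤ b ∧ b ≤ 2*n) : move (move σ a b) b a = σ := by
  funext i
  have key := sval_move (σ := move σ a b) hb ha (i + 1)
  rw [sval_move ha hb, moveIdx_moveIdx, sval_succ, sval_succ] at key
  exact Fin.ext key

end move

section config

variable {σ : Fin (2*n) → Fin (n+1)} {P Q : ℕ}

lemma card_sval_move_eq {a b : ℕ} (ha : 1 ≤ a ∧ a ≤ 2*n) (hb : 1 ≤ b ∧ b ≤ 2*n) (v : ℕ) :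
    #{j ∈ Icc 1 (2*n) | sval (move σ a b) j = v} = #{j ∈ Icc 1 (2*n) | sval σ j = v} := by
  refine card_nbij' (moveIdx a b) (moveIdx b a) (fun j hj => ?_) (fun j hj => ?_)
    (fun j _ => moveIdx_moveIdx a b j) (fun j _ => moveIdx_moveIdx b a j)
  · simp only [coe_filter, mem_Icc, Set.mem_ofPred_eq] at hj ⊢
    exact ⟨moveIdx_mem_Icc ha hb hj.1, by rw [← sval_move ha hb]; exact hj.2⟩
  · simp only [coe_filter, mem_Icc, Set.mem_ofPred_eq] at hj ⊢
    exact ⟨moveIdx_mem_Icc hb ha hj.1, by rw [sval_move ha hb, moveIdx_moveIdx]; exact hj.2⟩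

lemma mem_stirlingSet_move {a b : ℕ} (hσ : σ ∈ StirlingSet n) (ha : 1 ≤ a ∧ a ≤ 2*n)
    (hb : 1 ≤ b ∧ b ≤ 2*n)
    (h : ∀ x t y, 1 ≤ x → x < t → t < y → y ≤ 2*n →
      sval σ (moveIdx a b x) = sval σ (moveIdx a b y) →
      sval σ (moveIdx a b x) < sval σ (moveIdx a b t)) :
    move σ a b ∈ StirlingSet n := by
  refine StirlingSet.mem_iff_sval.mpr ⟨fun v hv1 hvn => ?_, fun x t y hx hxt hty hy he => ?_⟩
  · rw [card_sval_move_eq ha hb]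
    exact StirlingSet.card_sval_eq hσ hv1 hvn
  · simp only [sval_move ha hb] at he ⊢
    exact h x t y hx hxt hty hy he

/-- The two sides of the bijection behind `card_statSet_succ_mul`: a double ascent `P` whose
letter `k` recurs at `Q`, and a descent-plateau `k k` at `Q-1, Q` preceded by the maximal run
`P, …, Q-2` of letters larger than `k`. Moving the letter at `P` to `Q-1` and back exchanges
them. -/
structure IsDascConfig (σ : Fin (2*n) → Fin (n+1)) (P Q : ℕ) : Prop where
  mem : σ ∈ StirlingSet n
  one_le : 1 ≤ P
  add_two_le : P + 2 ≤ Q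
  le : Q ≤ 2*n
  sval_eq : sval σ P = sval σ Q
  pred_lt : sval σ (P-1) < sval σ P
  lt_of_mem_Ioo : ∀ t, P < t → t < Q → sval σ P < sval σ t

structure IsDpConfig (σ : Fin (2*n) → Fin (n+1)) (P Q : ℕ) : Prop where
  mem : σ ∈ StirlingSet n
  one_le : 1 ≤ P
  add_two_le : P + 2 ≤ Q
  le : Q ≤ 2*n
  sval_eq : sval σ (Q-1) = sval σ Q
  pred_lt : sval σ (P-1) < sval σ Q
  lt_of_mem_Icc : ∀ t, P ≤ t → t ≤ Q - 2 → sval σ Q < sval σ t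

lemma IsDascConfig.move_mem (c : IsDascConfig σ P Q) : move σ P (Q-1) ∈ StirlingSet n := by
  have hP := c.one_le; have hPQ := c.add_two_le; have hQ := c.le
  have hσ := c.mem
  have hI : ∀ j, 1 ≤ j → j ≤ 2*n → 1 ≤ moveIdx P (Q-1) j ∧ moveIdx P (Q-1) j ≤ 2*n :=
    fun j h1 h2 => moveIdx_mem_Icc ⟨by omega, by omega⟩ ⟨by omega, by omega⟩ ⟨h1, h2⟩
  refine mem_stirlingSet_move hσ ⟨by omega, by omega⟩ ⟨by omega, by omega⟩
    fun x t y hx hxt hty hy he => ?_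
  by_cases hk : sval σ (moveIdx P (Q-1) x) = sval σ P
  · have key : ∀ j, sval σ (moveIdx P (Q-1) j) = sval σ P → j = Q - 1 ∨ j = Q := by
      intro j hj
      rw [← moveIdx_moveIdx P (Q-1) j]
      rcases StirlingSet.eq_or_eq_of_sval_eq hσ hP hQ (by omega) c.sval_eq hj with h | h <;>
        rw [h]
      · exact .inl moveIdx_right
      · exact .inr (moveIdx_of_gt (by omega) (by omega))
    have := key x hk
    have := key y (he ▸ hk)
    omega
  have hxQ : x ≠ Q - 1 := fun h => hk (by rw [h, moveIdx_right])
  have hyQ : y ≠ Q - 1 := fun h => hk (by rw [he, h, moveIdx_right])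
  by_cases htQ : t = Q - 1
  · have hy' : moveIdx P (Q-1) y = y := moveIdx_of_gt (by omega) (by omega)
    have hyQ' : y ≠ Q := fun h => hk (by rw [he, hy', h, c.sval_eq])
    have hxlt : moveIdx P (Q-1) x < Q := by unfold moveIdx; split_ifs <;> omega
    rw [htQ, moveIdx_right, c.sval_eq]
    exact StirlingSet.sval_lt_of_sval_eq hσ (hI x hx (by omega)).1 hxlt (by omega) (by omega) he
  · exact StirlingSet.sval_lt_of_sval_eq hσ (hI x hx (by omega)).1
      (moveIdx_lt_moveIdx hxt hxQ htQ) (moveIdx_lt_moveIdx hty htQ hyQ) (hI y (by omega) hy).2 he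

/-- A letter whose copies straddle `P` after the move is smaller than `k`: had its second
copy been in the run `P, …, Q-2`, the first copy would break that run's maximality. -/
lemma IsDpConfig.sval_lt_of_straddle (c : IsDpConfig σ P Q) {x y : ℕ} (hx : 1 ≤ x) (hxP : x < P)
    (hPy : P < y) (hy : y ≤ 2*n) (hyQ : y ≠ Q) (he : sval σ x = sval σ (moveIdx (Q-1) P y)) :
    sval σ x < sval σ Q := by
  have hPQ := c.add_two_le
  rcases lt_or_gt_of_ne hyQ with hyQ | hyQ
  · rw [moveIdx_of_lt_of_le (by omega) (by omega)] at he
    have hbig := c.lt_of_mem_Icc (y-1) (by omega) (by omega)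
    have hpred := c.pred_lt
    rcases eq_or_lt_of_le (by omega : x ≤ P - 1) with hxP' | hxP'
    · rw [← hxP'] at hpred; omega
    · have := StirlingSet.sval_lt_of_sval_eq c.mem hx hxP' (by omega) (by omega) he
      omega
  · rw [moveIdx_of_gt (by omega) (by omega)] at he
    exact StirlingSet.sval_lt_of_sval_eq c.mem hx (by omega) hyQ hy he

lemma IsDpConfig.move_mem (c : IsDpConfig σ P Q) : move σ (Q-1) P ∈ StirlingSet n := by
  have hP := c.one_le; have hPQ := c.add_two_le; have hQ := c.le
  have hσ := c.mem
  have hI : ∀ j, 1 ≤ j → j ≤ 2*n → 1 ≤ moveIdx (Q-1) P j ∧ moveIdx (Q-1) P j ≤ 2*n :=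
    fun j h1 h2 => moveIdx_mem_Icc ⟨by omega, by omega⟩ ⟨by omega, by omega⟩ ⟨h1, h2⟩
  refine mem_stirlingSet_move hσ ⟨by omega, by omega⟩ ⟨by omega, by omega⟩
    fun x t y hx hxt hty hy he => ?_
  by_cases hk : sval σ (moveIdx (Q-1) P x) = sval σ Q
  · have key : ∀ j, sval σ (moveIdx (Q-1) P j) = sval σ Q → j = P ∨ j = Q := by
      intro j hj
      rw [← moveIdx_moveIdx (Q-1) P j]
      rcases StirlingSet.eq_or_eq_of_sval_eq hσ (by omega) hQ (by omega) c.sval_eq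
        (hj.trans c.sval_eq.symm) with h | h <;> rw [h]
      · exact .inl moveIdx_right
      · exact .inr (moveIdx_of_gt (by omega) (by omega))
    have hx' := key x hk
    have hy' := key y (he ▸ hk)
    rw [hk, moveIdx_of_lt_of_le (by omega) (by omega)]
    exact c.lt_of_mem_Icc _ (by omega) (by omega)
  have hkP : sval σ (moveIdx (Q-1) P P) = sval σ Q := by rw [moveIdx_right, c.sval_eq]
  have hxP : x ≠ P := fun h => hk (h ▸ hkP)
  have hyP : y ≠ P := fun h => hk (he ▸ h ▸ hkP)
  by_cases htP : t = P
  · rw [htP, hkP]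
    rw [moveIdx_of_lt (by omega) (by omega)] at he hk ⊢
    have hyQ : y ≠ Q := fun h => hk (by rw [he, h, moveIdx_of_gt (by omega) (by omega)])
    exact c.sval_lt_of_straddle hx (by omega) (by omega) hy hyQ he
  · exact StirlingSet.sval_lt_of_sval_eq hσ (hI x hx (by omega)).1
      (moveIdx_lt_moveIdx hxt hxP htP) (moveIdx_lt_moveIdx hty htP hyP) (hI y (by omega) hy).2 he

lemma IsDascConfig.isDpConfig_move (c : IsDascConfig σ P Q) : IsDpConfig (move σ P (Q-1)) P Q := by
  have hP := c.one_le; have hPQ := c.add_two_le; have hQ := c.le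
  have hs := sval_move (σ := σ) (a := P) (b := Q - 1) ⟨by omega, by omega⟩ ⟨by omega, by omega⟩
  have hQ' : sval (move σ P (Q-1)) Q = sval σ P := by
    rw [hs, moveIdx_of_gt (by omega) (by omega), c.sval_eq]
  refine ⟨c.move_mem, hP, hPQ, hQ, ?_, ?_, fun t h1 h2 => ?_⟩
  · rw [hQ', hs, moveIdx_right]
  · rw [hQ', hs, moveIdx_of_lt (by omega) (by omega)]
    exact c.pred_lt
  · rw [hQ', hs, moveIdx_of_le_of_lt h1 (by omega)]
    exact c.lt_of_mem_Ioo _ (by omega) (by omega)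

lemma IsDpConfig.isDascConfig_move (c : IsDpConfig σ P Q) : IsDascConfig (move σ (Q-1) P) P Q := by
  have hP := c.one_le; have hPQ := c.add_two_le; have hQ := c.le
  have hs := sval_move (σ := σ) (a := Q - 1) (b := P) ⟨by omega, by omega⟩ ⟨by omega, by omega⟩
  have hP' : sval (move σ (Q-1) P) P = sval σ Q := by rw [hs, moveIdx_right, c.sval_eq]
  refine ⟨c.move_mem, hP, hPQ, hQ, ?_, ?_, fun t h1 h2 => ?_⟩
  · rw [hP', hs, moveIdx_of_gt (by omega) (by omega)]
  · rw [hP', hs, moveIdx_of_lt (by omega) (by omega)]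
    exact c.pred_lt
  · rw [hP', hs, moveIdx_of_lt_of_le h1 (by omega)]
    exact c.lt_of_mem_Icc _ (by omega) (by omega)

end config

def IsLapAt (w : ℕ → ℕ) (i : ℕ) : Prop := w (i-1) < w i ∧ w i = w (i+1)

def IsDascAt (w : ℕ → ℕ) (i : ℕ) : Prop := w (i-1) < w i ∧ w i < w (i+1)

def IsDpAt (w : ℕ → ℕ) (i : ℕ) : Prop := w i < w (i-1) ∧ w i = w (i+1)

instance (w : ℕ → ℕ) : DecidablePred (IsLapAt w) := fun _ => inferInstanceAs (Decidable (_ ∧ _))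

instance (w : ℕ → ℕ) : DecidablePred (IsDascAt w) := fun _ => inferInstanceAs (Decidable (_ ∧ _))

instance (w : ℕ → ℕ) : DecidablePred (IsDpAt w) := fun _ => inferInstanceAs (Decidable (_ ∧ _))

section patterns

variable {σ : Fin (2*n) → Fin (n+1)}

lemma lapQ_eq_card : lapQ σ = #{i ∈ Icc 1 (2*n-1) | IsLapAt (sval σ) i} := rfl

lemma dascQ_eq_card : dascQ σ = #{i ∈ Icc 1 (2*n-1) | IsDascAt (sval σ) i} := rfl

lemma dpQ_eq_card : dpQ σ = #{i ∈ Icc 1 (2*n-1) | IsDpAt (sval σ) i} := by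
  refine congrArg card (Finset.ext fun i => ?_)
  simp only [mem_filter, mem_Icc]
  unfold IsDpAt
  constructor
  · rintro ⟨⟨h1, h2⟩, h⟩; exact ⟨⟨by omega, h2⟩, h⟩
  · rintro ⟨⟨h1, h2⟩, h⟩
    refine ⟨⟨?_, h2⟩, h⟩
    by_contra h1'
    rw [show i = 1 by omega, show 1 - 1 = 0 by rfl, sval_eq_zero (j := 0) (by omega)] at h
    omega

end patterns

lemma IsDascAt.not_isLapAt {w : ℕ → ℕ} {i : ℕ} (h : IsDascAt w i) : ¬IsLapAt w i :=
  fun h' => h.2.ne h'.2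

lemma IsDascAt.not_isDpAt {w : ℕ → ℕ} {i : ℕ} (h : IsDascAt w i) : ¬IsDpAt w i :=
  fun h' => h.2.ne h'.2

lemma IsDpAt.not_isLapAt {w : ℕ → ℕ} {i : ℕ} (h : IsDpAt w i) : ¬IsLapAt w i :=
  fun h' => h.1.not_gt h'.1

lemma IsDpAt.not_isDascAt {w : ℕ → ℕ} {i : ℕ} (h : IsDpAt w i) : ¬IsDascAt w i :=
  fun h' => h.1.not_gt h'.1

section stats

variable {σ : Fin (2*n) → Fin (n+1)} {P Q : ℕ}

lemma IsDascConfig.isDascAt (c : IsDascConfig σ P Q) : IsDascAt (sval σ) P :=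
  ⟨c.pred_lt, c.lt_of_mem_Ioo _ (by omega) (by have := c.add_two_le; omega)⟩

lemma IsDpConfig.isDpAt (c : IsDpConfig σ P Q) : IsDpAt (sval σ) (Q-1) := by
  have := c.add_two_le
  rw [IsDpAt, c.sval_eq, show Q - 1 + 1 = Q by omega]
  exact ⟨c.lt_of_mem_Icc _ (by omega) (by omega), rfl⟩

lemma IsDascConfig.pattern_move_iff (c : IsDascConfig σ P Q) {i : ℕ} (hi : 1 ≤ i)
    (hiP : i ≠ P) :
    (IsLapAt (sval (move σ P (Q-1))) (moveIdx (Q-1) P i) ↔ IsLapAt (sval σ) i) ∧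
    (IsDascAt (sval (move σ P (Q-1))) (moveIdx (Q-1) P i) ↔ IsDascAt (sval σ) i) ∧
    (IsDpAt (sval (move σ P (Q-1))) (moveIdx (Q-1) P i) ↔ IsDpAt (sval σ) i) := by
  have hP := c.one_le; have hPQ := c.add_two_le; have hQ := c.le
  have hs := sval_move (σ := σ) (a := P) (b := Q - 1) ⟨by omega, by omega⟩ ⟨by omega, by omega⟩
  have hv : ∀ {x y}, x = y → sval σ x = sval σ y := fun h => congrArg _ h
  have h₁ := c.pred_lt
  have h₂ := c.sval_eq
  have h₃ := c.lt_of_mem_Ioo (P+1) (by omega) (by omega)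
  have h₄ := c.lt_of_mem_Ioo (Q-1) (by omega) (by omega)
  have h₅ : P < i → i < Q → sval σ P < sval σ i := c.lt_of_mem_Ioo i
  have h₆ : i + 1 = P → sval σ (i+1) = sval σ P := hv
  have h₇ : i + 1 = P → sval σ i = sval σ (P-1) := fun h => hv (by omega)
  have h₈ : i - 1 = P → sval σ (i-1) = sval σ P := hv
  have h₉ : i + 1 = Q → sval σ (i+1) = sval σ Q := hv
  have h₁₀ : i = Q → sval σ i = sval σ Q ∧ sval σ (i-1) = sval σ (Q-1) :=
    fun h => ⟨hv h, hv (by omega)⟩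
  have h₁₁ : i = Q → sval σ (i+1) ≠ sval σ Q := fun hiQ h => by
    rcases StirlingSet.eq_or_eq_of_sval_eq c.mem hP hQ (by omega) c.sval_eq
      (h.trans c.sval_eq.symm) with h | h <;> omega
  -- the neighbours of `i` change only for `i = P ± 1`, `Q - 1`, `Q`, settled by the facts above
  unfold IsLapAt IsDascAt IsDpAt
  simp only [hs, moveIdx_moveIdx]
  obtain hl | ⟨hi₁, hl⟩ | ⟨hi₁, hl⟩ := moveIdx_moveIdx_pred hP (by omega : P < Q - 1) hiP <;>
  obtain hr | ⟨hi₂, hr⟩ | ⟨hi₂, hr⟩ := moveIdx_moveIdx_succ (by omega : P < Q - 1) hiP <;>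
  rw [hl, hr] <;> omega

lemma IsDascConfig.card_erase_move_eq (c : IsDascConfig σ P Q) (r : (ℕ → ℕ) → ℕ → Prop)
    [∀ w, DecidablePred (r w)]
    (hr : ∀ i, 1 ≤ i → i ≠ P → (r (sval (move σ P (Q-1))) (moveIdx (Q-1) P i) ↔ r (sval σ) i)) :
    #({i ∈ Icc 1 (2*n-1) | r (sval σ) i}.erase P) =
      #({i ∈ Icc 1 (2*n-1) | r (sval (move σ P (Q-1))) i}.erase (Q-1)) := by
  have hP := c.one_le; have hPQ := c.add_two_le; have hQ := c.le
  have hI : ∀ {a b}, 1 ≤ a → a ≤ 2*n - 1 → 1 ≤ b → b ≤ 2*n - 1 →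
      ∀ j ∈ Icc 1 (2*n-1), moveIdx a b j ∈ Icc 1 (2*n-1) := fun h1 h2 h3 h4 j hj => by
    rw [mem_Icc] at hj ⊢; exact moveIdx_mem_Icc ⟨h1, h2⟩ ⟨h3, h4⟩ hj
  have := card_erase_filter_eq_of_invOn _ _ (hI (by omega) (by omega) hP (by omega))
    (hI hP (by omega) (by omega) (by omega)) (fun j _ => moveIdx_moveIdx _ _ j)
    (fun j _ => moveIdx_moveIdx _ _ j) (mem_Icc.mpr ⟨hP, by omega⟩)
    fun i hi hiP => hr i (mem_Icc.mp hi).1 hiP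
  rwa [moveIdx_right] at this

lemma IsDascConfig.lapQ_move (c : IsDascConfig σ P Q) : lapQ (move σ P (Q-1)) = lapQ σ := by
  have h := c.card_erase_move_eq IsLapAt fun i hi hiP => (c.pattern_move_iff hi hiP).1
  rw [erase_eq_of_notMem fun h => c.isDascAt.not_isLapAt (mem_filter.mp h).2,
    erase_eq_of_notMem fun h => c.isDpConfig_move.isDpAt.not_isLapAt (mem_filter.mp h).2] at h
  rw [lapQ_eq_card, lapQ_eq_card, h]

lemma IsDascConfig.dascQ_move (c : IsDascConfig σ P Q) :
    dascQ (move σ P (Q-1)) + 1 = dascQ σ := by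
  have hP := c.one_le; have hPQ := c.add_two_le; have hQ := c.le
  have hmem : P ∈ {i ∈ Icc 1 (2*n-1) | IsDascAt (sval σ) i} :=
    mem_filter.mpr ⟨mem_Icc.mpr ⟨hP, by omega⟩, c.isDascAt⟩
  have h := c.card_erase_move_eq IsDascAt fun i hi hiP => (c.pattern_move_iff hi hiP).2.1
  rw [card_erase_of_mem hmem,
    erase_eq_of_notMem fun h => c.isDpConfig_move.isDpAt.not_isDascAt (mem_filter.mp h).2] at h
  rw [dascQ_eq_card, dascQ_eq_card, ← h, Nat.sub_add_cancel (card_pos.mpr ⟨P, hmem⟩)]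

lemma IsDascConfig.dpQ_move (c : IsDascConfig σ P Q) : dpQ (move σ P (Q-1)) = dpQ σ + 1 := by
  have hP := c.one_le; have hPQ := c.add_two_le; have hQ := c.le
  have hmem : Q - 1 ∈ {i ∈ Icc 1 (2*n-1) | IsDpAt (sval (move σ P (Q-1))) i} :=
    mem_filter.mpr ⟨mem_Icc.mpr ⟨by omega, by omega⟩, c.isDpConfig_move.isDpAt⟩
  have h := c.card_erase_move_eq IsDpAt fun i hi hiP => (c.pattern_move_iff hi hiP).2.2
  rw [erase_eq_of_notMem fun h => c.isDascAt.not_isDpAt (mem_filter.mp h).2,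
    card_erase_of_mem hmem] at h
  rw [dpQ_eq_card, dpQ_eq_card, h, Nat.sub_add_cancel (card_pos.mpr ⟨Q - 1, hmem⟩)]

end stats

def lastPos (σ : Fin (2*n) → Fin (n+1)) (p : ℕ) : ℕ :=
  Nat.findGreatest (fun j => sval σ j = sval σ p) (2*n)

-- Position `0` carries the letter `0`, so the search always succeeds.
def runStart (σ : Fin (2*n) → Fin (n+1)) (J : ℕ) : ℕ :=
  Nat.findGreatest (fun t => sval σ t < sval σ J) (J-1) + 1

section canonical

variable {σ : Fin (2*n) → Fin (n+1)} {P Q : ℕ}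

lemma IsDascAt.isDascConfig (hσ : σ ∈ StirlingSet n) {p : ℕ} (h : IsDascAt (sval σ) p) :
    IsDascConfig σ p (lastPos σ p) := by
  have hpI := mem_Icc_of_sval_pred_lt h.1
  have hcard := StirlingSet.card_sval_eq hσ (StirlingSet.sval_pos hσ hpI.1 hpI.2) (sval_le σ p)
  obtain ⟨q, hq, hqp⟩ := exists_mem_ne (s := {j ∈ Icc 1 (2*n) | sval σ j = sval σ p}) (by omega) p
  rw [mem_filter, mem_Icc] at hq
  have hpq := lt_of_le_of_ne (StirlingSet.le_of_sval_eq_of_pred_lt hσ h.1 hq.1.1 hq.2) hqp.symm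
  have hqQ : q ≤ lastPos σ p := Nat.le_findGreatest hq.1.2 hq.2
  have hQ : sval σ (lastPos σ p) = sval σ p :=
    Nat.findGreatest_spec (P := fun j => sval σ j = sval σ p) hq.1.2 hq.2
  have hQp : lastPos σ p ≠ p + 1 := fun h' => by rw [h'] at hQ; exact h.2.ne' hQ
  refine ⟨hσ, hpI.1, by omega, Nat.findGreatest_le _, hQ.symm, h.1, fun t ht1 ht2 => ?_⟩
  exact StirlingSet.sval_lt_of_sval_eq hσ hpI.1 ht1 ht2 (Nat.findGreatest_le _) hQ.symm

lemma IsDpAt.isDpConfig (hσ : σ ∈ StirlingSet n) {J : ℕ} (hJ : J + 1 ≤ 2*n)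
    (h : IsDpAt (sval σ) J) : IsDpConfig σ (runStart σ J) (J+1) := by
  have hJ1 : 2 ≤ J := by
    by_contra hJ1
    have : sval σ (J-1) = 0 := sval_eq_zero (by omega)
    exact absurd h.1 (by omega)
  have hk := StirlingSet.sval_pos hσ (j := J) (by omega) (by omega)
  set m := Nat.findGreatest (fun t => sval σ t < sval σ J) (J-1)
  have hm : sval σ m < sval σ J :=
    Nat.findGreatest_spec (P := fun t => sval σ t < sval σ J) (Nat.zero_le _)
      (by rwa [sval_eq_zero (j := 0) (by omega)])
  have hmJ : m ≠ J - 1 := fun h' => by rw [h'] at hm; exact h.1.not_gt hm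
  have hmJ' : m ≤ J - 1 := Nat.findGreatest_le _
  refine ⟨hσ, by simp only [runStart]; omega, by simp only [runStart]; omega, hJ, by simpa using h.2, ?_,
    fun t ht1 ht2 => ?_⟩
  · simpa [runStart, ← h.2] using hm
  · simp only [runStart] at ht1 ht2 ⊢
    have hlt := Nat.findGreatest_is_greatest (P := fun t => sval σ t < sval σ J) (by omega)
      (by omega : t ≤ J - 1)
    have hne : sval σ t ≠ sval σ J := fun he => by
      rcases StirlingSet.eq_or_eq_of_sval_eq hσ (by omega) hJ (by omega) h.2 he with h' | h' <;>
        omega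
    rw [← h.2]
    omega

lemma IsDascConfig.lastPos_eq (c : IsDascConfig σ P Q) : lastPos σ P = Q := by
  have hQP := Nat.le_findGreatest (P := fun j => sval σ j = sval σ P) c.le c.sval_eq.symm
  rcases StirlingSet.eq_or_eq_of_sval_eq c.mem c.one_le c.le (by have := c.add_two_le; omega)
    c.sval_eq (Nat.findGreatest_spec (P := fun j => sval σ j = sval σ P) c.le c.sval_eq.symm)
    with h | h
  · have := c.add_two_le; unfold lastPos; omega
  · exact h

lemma IsDpConfig.runStart_eq (c : IsDpConfig σ P Q) : runStart σ (Q-1) = P := by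
  have hP := c.one_le; have hPQ := c.add_two_le
  have : Nat.findGreatest (fun t => sval σ t < sval σ (Q-1)) (Q-1-1) = P - 1 := by
    rw [Nat.findGreatest_eq_iff, c.sval_eq]
    refine ⟨by omega, fun _ => c.pred_lt, fun t ht1 ht2 => ?_⟩
    exact (c.lt_of_mem_Icc t (by omega) (by omega)).not_gt
  rw [runStart, this]
  omega

end canonical

def statSet (n i a b : ℕ) : Finset (Fin (2*n) → Fin (n+1)) :=
  {σ ∈ StirlingSet n | lapQ σ = i ∧ dascQ σ = a ∧ dpQ σ = b}

section bijection

variable {σ : Fin (2*n) → Fin (n+1)} {P Q i a b : ℕ}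

lemma IsDascConfig.move_mem_statSet (c : IsDascConfig σ P Q) (hσ : σ ∈ statSet n i (a+1) b) :
    move σ P (Q-1) ∈ statSet n i a (b+1) := by
  simp only [statSet, mem_filter] at hσ ⊢
  have := c.dascQ_move
  exact ⟨c.move_mem, c.lapQ_move.trans hσ.2.1, by omega, by rw [c.dpQ_move, hσ.2.2.2]⟩

lemma IsDpConfig.move_mem_statSet (c : IsDpConfig σ P Q) (hσ : σ ∈ statSet n i a (b+1)) :
    move σ (Q-1) P ∈ statSet n i (a+1) b := by
  have c' := c.isDascConfig_move
  have hback : move (move σ (Q-1) P) P (Q-1) = σ := by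
    have := c.one_le; have := c.add_two_le; have := c.le
    exact move_move ⟨by omega, by omega⟩ ⟨by omega, by omega⟩
  simp only [statSet, mem_filter] at hσ ⊢
  have hl := c'.lapQ_move
  have hd := c'.dascQ_move
  have hp := c'.dpQ_move
  rw [hback] at hl hd hp
  exact ⟨c'.mem, by omega, by omega, by omega⟩

theorem card_sigma_isDascAt_eq_card_sigma_isDpAt (n i a b : ℕ) :
    #((statSet n i (a+1) b).sigma fun σ => {p ∈ Icc 1 (2*n-1) | IsDascAt (sval σ) p}) =
      #((statSet n i a (b+1)).sigma fun σ => {J ∈ Icc 1 (2*n-1) | IsDpAt (sval σ) J}) := by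
  refine card_nbij' (fun x => ⟨move x.1 x.2 (lastPos x.1 x.2 - 1), lastPos x.1 x.2 - 1⟩)
    (fun y => ⟨move y.1 y.2 (runStart y.1 y.2), runStart y.1 y.2⟩) ?_ ?_ ?_ ?_
  · rintro ⟨σ, p⟩ hx
    simp only [coe_sigma, Set.mem_sigma_iff, mem_coe, mem_filter, mem_Icc] at hx ⊢
    have c := hx.2.2.isDascConfig (mem_filter.mp hx.1).1
    have := c.add_two_le; have := c.le
    exact ⟨c.move_mem_statSet hx.1, ⟨by omega, by omega⟩, c.isDpConfig_move.isDpAt⟩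
  · rintro ⟨τ, J⟩ hy
    simp only [coe_sigma, Set.mem_sigma_iff, mem_coe, mem_filter, mem_Icc] at hy ⊢
    have c := hy.2.2.isDpConfig (mem_filter.mp hy.1).1 (by omega)
    have := c.add_two_le
    exact ⟨c.move_mem_statSet hy.1, ⟨c.one_le, by omega⟩, c.isDascConfig_move.isDascAt⟩
  · rintro ⟨σ, p⟩ hx
    simp only [coe_sigma, Set.mem_sigma_iff, mem_coe, mem_filter, mem_Icc] at hx
    have c := hx.2.2.isDascConfig (mem_filter.mp hx.1).1
    have := c.one_le; have := c.add_two_le; have := c.le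
    simp only [c.isDpConfig_move.runStart_eq, move_move ⟨c.one_le, (by omega : p ≤ 2*n)⟩
      ⟨(by omega : 1 ≤ lastPos σ p - 1), (by omega : lastPos σ p - 1 ≤ 2*n)⟩]
  · rintro ⟨τ, J⟩ hy
    simp only [coe_sigma, Set.mem_sigma_iff, mem_coe, mem_filter, mem_Icc] at hy
    have c := hy.2.2.isDpConfig (mem_filter.mp hy.1).1 (by omega)
    have := c.one_le; have := c.add_two_le
    have hQ := c.isDascConfig_move.lastPos_eq
    simp only [Nat.add_sub_cancel] at hQ ⊢
    simp only [hQ, Nat.add_sub_cancel, move_move ⟨(by omega : 1 ≤ J), (by omega : J ≤ 2*n)⟩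
      ⟨c.one_le, (by omega : runStart τ J ≤ 2*n)⟩]

theorem card_statSet_succ_mul (n i a b : ℕ) :
    #(statSet n i (a+1) b) * (a+1) = #(statSet n i a (b+1)) * (b+1) := by
  have h := card_sigma_isDascAt_eq_card_sigma_isDpAt n i a b
  rwa [card_sigma, card_sigma, sum_const_nat fun σ hσ => by
      rw [← dascQ_eq_card]; exact (mem_filter.mp hσ).2.2.1,
    sum_const_nat fun σ hσ => by rw [← dpQ_eq_card]; exact (mem_filter.mp hσ).2.2.2] at h

end bijection

namespace StirlingSet

variable {σ : Fin (2*n) → Fin (n+1)}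

theorem lapQ_le (hσ : σ ∈ StirlingSet n) : lapQ σ ≤ n := by
  rw [lapQ_eq_card]
  refine (card_le_card_of_injOn (t := Icc 1 n) (sval σ) (fun i hi => ?_)
    fun p hp q hq he => ?_).trans (by simp)
  · have hi := mem_filter.mp hi
    have hiI := mem_Icc_of_sval_pred_lt hi.2.1
    exact mem_Icc.mpr ⟨sval_pos hσ hiI.1 hiI.2, sval_le σ i⟩
  · exact eq_of_sval_eq_of_pred_lt hσ (mem_filter.mp hp).2.1 (mem_filter.mp hq).2.1 he

theorem dascQ_lt (hσ : σ ∈ StirlingSet n) (hn : 1 ≤ n) : dascQ σ < n := by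
  rw [dascQ_eq_card]
  refine lt_of_le_of_lt (card_le_card_of_injOn (t := Icc 1 (n-1)) (sval σ) (fun i hi => ?_)
    fun p hp q hq he => ?_) (by simp; omega)
  · have hi := mem_filter.mp hi
    have hiI := mem_Icc_of_sval_pred_lt hi.2.1
    have := sval_le σ (i+1)
    exact mem_Icc.mpr ⟨sval_pos hσ hiI.1 hiI.2, by have := hi.2.2; omega⟩
  · exact eq_of_sval_eq_of_pred_lt hσ (mem_filter.mp hp).2.1 (mem_filter.mp hq).2.1 he

/-- The two copies of the largest letter `n` form a left ascent-plateau. -/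
theorem one_le_lapQ (hσ : σ ∈ StirlingSet n) (hn : 1 ≤ n) : 1 ≤ lapQ σ := by
  obtain ⟨x, y, hxy, hF⟩ := card_eq_two.mp (card_sval_eq hσ hn le_rfl)
  have hmem : ∀ j, j ∈ ({x, y} : Finset ℕ) → 1 ≤ j ∧ j ≤ 2*n ∧ sval σ j = n := fun j hj => by
    rw [← hF, mem_filter, mem_Icc] at hj; exact ⟨hj.1.1, hj.1.2, hj.2⟩
  wlog hlt : x < y generalizing x y
  · exact this y x hxy.symm (by rw [hF, pair_comm]) (fun j hj => hmem j (by
      rw [pair_comm]; exact hj)) (by omega)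
  obtain ⟨hx1, hx2, hxn⟩ := hmem x (by simp)
  obtain ⟨hy1, hy2, hyn⟩ := hmem y (by simp)
  have hyx : y = x + 1 := by
    by_contra hne
    have := sval_lt_of_sval_eq hσ hx1 (by omega : x < x + 1) (by omega) hy2 (hxn.trans hyn.symm)
    have := sval_le σ (x + 1)
    omega
  have hpred : sval σ (x-1) < n := by
    have hne : sval σ (x-1) ≠ sval σ x := fun he => by
      rcases eq_or_eq_of_sval_eq hσ hx1 hy2 hlt (hxn.trans hyn.symm) he with h | h <;> omega
    have := sval_le σ (x-1)
    omega
  rw [lapQ_eq_card, Nat.one_le_iff_ne_zero, Ne, card_eq_zero, ← not_nonempty_iff_eq_empty,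
    not_not]
  exact ⟨x, mem_filter.mpr ⟨mem_Icc.mpr ⟨hx1, by omega⟩, by rw [hxn]; exact hpred,
    by rw [hxn, ← hyx, hyn]⟩⟩

theorem sum_filter_dpQ_eq_zero {R : Type*} [CommSemiring R] (hn : 1 ≤ n) (x w : R) :
    ∑ σ ∈ StirlingSet n with dpQ σ = 0, x ^ lapQ σ * w ^ dascQ σ =
      ∑ i ∈ Icc 1 n, ∑ j ∈ range n, (gammaNum n i j : R) * x ^ i * w ^ j := by
  rw [← sum_product', ← sum_fiberwise_of_maps_to (g := fun σ => (lapQ σ, dascQ σ))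
    (t := Icc 1 n ×ˢ range n) fun σ hσ => by
      have hσ := (mem_filter.mp hσ).1
      exact mem_product.mpr ⟨mem_Icc.mpr ⟨one_le_lapQ hσ hn, lapQ_le hσ⟩,
        mem_range.mpr (dascQ_lt hσ hn)⟩]
  refine sum_congr rfl fun ⟨i, j⟩ _ => ?_
  have hfiber : {σ ∈ {σ ∈ StirlingSet n | dpQ σ = 0} | (lapQ σ, dascQ σ) = (i, j)} =
      statSet n i j 0 := by
    rw [filter_filter]
    exact filter_congr fun σ _ => by simp only [Prod.mk.injEq]; tauto
  have hterm : ∀ σ ∈ statSet n i j 0, x ^ lapQ σ * w ^ dascQ σ = x ^ i * w ^ j :=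
    fun σ hσ => by rw [(mem_filter.mp hσ).2.1, (mem_filter.mp hσ).2.2.1]
  rw [hfiber, sum_congr rfl hterm, sum_const, nsmul_eq_mul, mul_assoc]
  rfl

end StirlingSet

end Stirling

theorem statement_15 (n : ℕ) (hn : 1 ≤ n) :
    (∑ σ ∈ StirlingSet n,
        (X 0 : MvPolynomial (Fin 3) ℤ) ^ lapQ σ * X 1 ^ dascQ σ * X 2 ^ dpQ σ) =
      ∑ i ∈ Finset.Icc 1 n, ∑ j ∈ Finset.range n,
        (gammaNum n i j : MvPolynomial (Fin 3) ℤ) * X 0 ^ i * (X 1 + X 2) ^ j := by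
  rw [sum_mul_pow_mul_pow_eq_sum_add_pow (StirlingSet n) lapQ dascQ dpQ (card_statSet_succ_mul n)
    (fun i => (X 0 : MvPolynomial (Fin 3) ℤ) ^ i), StirlingSet.sum_filter_dpQ_eq_zero hn]
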